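/- arXiv:2012.13858 — 3 statements merged into one kernel-verified Lean document; each statement's English description precedes it below -/
import Mathlib

section
/- If A is a distributive meet-semilattice, then its semilattice of filters (ordered by inclusion, meet = intersection) is distributive: if p ∩ q ⊆ r for filters p, q, r, then there exist filters p' ⊇ p and q' ⊇ q with p' ∩ q' = r. -/
def IsSLFilter {α : Type*} [SemilatticeInf α] [OrderTop α] (p : Set α) : Prop :=
  p.Nonempty ∧ (∀ x ∈ p, ∀ y, x ≤ y → y ∈ p) ∧ ∀ x ∈ p, ∀ y ∈ p, x ⊓ y ∈ p

def IsDistribSL (α : Type*) [SemilatticeInf α] [OrderTop α] : Prop :=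
  ∀ a b c : α, a ⊓ b ≤ c → ∃ a' b' : α, a ≤ a' ∧ b ≤ b' ∧ c = a' ⊓ b'

/-!
For the witnesses take the filter joins `p ⊔ r` and `q ⊔ r`, where `p ⊔ r` consists of the
elements above some `a ⊓ c` with `a ∈ p`, `c ∈ r`. Both contain `r`, so it remains to show that
their intersection lies in `r`. By distributivity, any `x ≥ a ⊓ c` splits as `x = a₁ ⊓ c₁` with
`a₁ ≥ a, x` and `c₁ ≥ c`; since `c₁ ∈ r`, membership of `x` in `r` reduces to that of such `a₁`.
Doing this once for `x ≥ a ⊓ c` and once more for `a₁ ≥ x ≥ b ⊓ d` (with `b ∈ q`, `d ∈ r`)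
leaves an element above both `a ∈ p` and `b ∈ q`, which lies in `p ∩ q ⊆ r`.
-/

section

variable {α : Type*} [SemilatticeInf α] [OrderTop α]

def filterJoin (p r : Set α) : Set α :=
  {x | ∃ a ∈ p, ∃ c ∈ r, a ⊓ c ≤ x}

namespace IsSLFilter

variable {p r : Set α}

theorem join (hp : IsSLFilter p) (hr : IsSLFilter r) : IsSLFilter (filterJoin p r) := by
  obtain ⟨⟨a₀, ha₀⟩, -, hp_inf⟩ := hp
  obtain ⟨⟨c₀, hc₀⟩, -, hr_inf⟩ := hr
  refine ⟨⟨a₀ ⊓ c₀, a₀, ha₀, c₀, hc₀, le_rfl⟩, ?_, ?_⟩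
  · rintro x ⟨a, ha, c, hc, hx⟩ y hxy
    exact ⟨a, ha, c, hc, hx.trans hxy⟩
  · rintro x ⟨a, ha, c, hc, hx⟩ y ⟨a', ha', c', hc', hy⟩
    refine ⟨a ⊓ a', hp_inf a ha a' ha', c ⊓ c', hr_inf c hc c' hc', ?_⟩
    rw [inf_inf_inf_comm]
    exact inf_le_inf hx hy

theorem subset_join_right (hp : IsSLFilter p) : r ⊆ filterJoin p r := by
  obtain ⟨⟨a₀, ha₀⟩, -⟩ := hp
  exact fun c hc => ⟨a₀, ha₀, c, hc, inf_le_right⟩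

theorem subset_join_left (hr : IsSLFilter r) : p ⊆ filterJoin p r := by
  obtain ⟨⟨c₀, hc₀⟩, -⟩ := hr
  exact fun a ha => ⟨a, ha, c₀, hc₀, inf_le_left⟩

end IsSLFilter

theorem IsDistribSL.mem_of_inf_le (hdist : IsDistribSL α) {r : Set α} (hr : IsSLFilter r)
    {a c x : α} (hx : a ⊓ c ≤ x) (hc : c ∈ r) (h : ∀ y, a ≤ y → x ≤ y → y ∈ r) : x ∈ r := by
  obtain ⟨-, hr_up, hr_inf⟩ := hr
  obtain ⟨a₁, c₁, ha₁, hc₁, rfl⟩ := hdist a c x hx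
  exact hr_inf a₁ (h a₁ ha₁ inf_le_left) c₁ (hr_up c hc c₁ hc₁)

theorem IsDistribSL.join_inter_join_subset (hdist : IsDistribSL α) {p q r : Set α}
    (hp : IsSLFilter p) (hq : IsSLFilter q) (hr : IsSLFilter r) (hsub : p ∩ q ⊆ r) :
    filterJoin p r ∩ filterJoin q r ⊆ r := by
  rintro x ⟨⟨a, ha, c, hc, hac⟩, ⟨b, hb, d, hd, hbd⟩⟩
  refine hdist.mem_of_inf_le hr hac hc fun y hay hxy => ?_
  refine hdist.mem_of_inf_le hr (hbd.trans hxy) hd fun z hbz hyz => ?_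
  exact hsub ⟨hp.2.1 a ha z (hay.trans hyz), hq.2.1 b hb z hbz⟩

end

theorem filterSemilattice_distributive {α : Type*} [SemilatticeInf α] [OrderTop α]
    (hdist : IsDistribSL α) (p q r : Set α)
    (hp : IsSLFilter p) (hq : IsSLFilter q) (hr : IsSLFilter r)
    (hsub : p ∩ q ⊆ r) :
    ∃ p' q' : Set α, IsSLFilter p' ∧ IsSLFilter q' ∧
      p ⊆ p' ∧ q ⊆ q' ∧ p' ∩ q' = r :=
  ⟨filterJoin p r, filterJoin q r, hp.join hr, hq.join hr, hr.subset_join_left,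
    hr.subset_join_left,
    (hdist.join_inter_join_subset hp hq hr hsub).antisymm
      (Set.subset_inter hp.subset_join_right hq.subset_join_right)⟩
end

section
/- If A is a distributive meet-semilattice and a, b are filters of A, then the set C = { x ∈ A | for all y, if x ≤ y and y ∈ a then y ∈ b } is a filter of A; moreover C is the relative pseudocomplement of a with respect to b among filters: for every filter c, c ∩ a ⊆ b if and only if c ⊆ C. Hence the filter semilattice of a distributive meet-semilattice is an implicative semilattice. -/
section Preorder

variable {α : Type*}

def filterHImp [LE α] (a b : Set α) : Set α :=
  {x | ∀ y, x ≤ y → y ∈ a → y ∈ b}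

variable [Preorder α]

theorem isUpperSet_filterHImp (a b : Set α) : IsUpperSet (filterHImp a b) :=
  fun _ _ hxz hx y hzy hya => hx y (hxz.trans hzy) hya

theorem inter_subset_iff_subset_filterHImp {a b c : Set α} (hc : IsUpperSet c) :
    c ∩ a ⊆ b ↔ c ⊆ filterHImp a b :=
  ⟨fun h _ hx _ hxy hya => h ⟨hc hxy hx, hya⟩, fun h x ⟨hxc, hxa⟩ => h hxc x le_rfl hxa⟩

end Preorder

section SemilatticeInf

variable {α : Type*} [SemilatticeInf α] [OrderTop α]

theorem IsSLFilter.isUpperSet {p : Set α} (hp : IsSLFilter p) : IsUpperSet p :=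
  fun _ y hxy hx => hp.2.1 _ hx y hxy

theorem IsSLFilter.top_mem {p : Set α} (hp : IsSLFilter p) : ⊤ ∈ p :=
  let ⟨_, hx⟩ := hp.1
  hp.isUpperSet le_top hx

theorem top_mem_filterHImp {a b : Set α} (hb : ⊤ ∈ b) : ⊤ ∈ filterHImp a b := by
  intro y hy _
  rwa [top_le_iff.mp hy]

theorem inf_mem_filterHImp (hdist : IsDistribSL α) {a b : Set α} (ha : IsUpperSet a)
    (hb : ∀ x ∈ b, ∀ y ∈ b, x ⊓ y ∈ b) {x x' : α} (hx : x ∈ filterHImp a b)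
    (hx' : x' ∈ filterHImp a b) : x ⊓ x' ∈ filterHImp a b := by
  intro y hy hya
  obtain ⟨u, v, hxu, hx'v, rfl⟩ := hdist x x' y hy
  exact hb u (hx u hxu (ha inf_le_left hya)) v (hx' v hx'v (ha inf_le_right hya))

theorem isSLFilter_filterHImp (hdist : IsDistribSL α) {a b : Set α} (ha : IsUpperSet a)
    (hb : IsSLFilter b) : IsSLFilter (filterHImp a b) :=
  ⟨⟨⊤, top_mem_filterHImp hb.top_mem⟩, fun _ hx _ hxy => isUpperSet_filterHImp a b hxy hx,
    fun _ hx _ hx' => inf_mem_filterHImp hdist ha hb.2.2 hx hx'⟩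

end SemilatticeInf

theorem filters_implicative {α : Type*} [SemilatticeInf α] [OrderTop α]
    (hdist : IsDistribSL α) (a b : Set α) (ha : IsSLFilter a) (hb : IsSLFilter b) :
    IsSLFilter {x : α | ∀ y, x ≤ y → y ∈ a → y ∈ b} ∧
    ∀ c : Set α, IsSLFilter c →
      (c ∩ a ⊆ b ↔ c ⊆ {x : α | ∀ y, x ≤ y → y ∈ a → y ∈ b}) :=
  ⟨isSLFilter_filterHImp hdist ha.isUpperSet hb,
    fun _ hc => inter_subset_iff_subset_filterHImp hc.isUpperSet⟩
end

section
/- For a □-frame (X, ≤, R), the map γ_R sending x to R[x] = { y | xRy } is well-defined into the set of filters of (X, ≤) and preserves top and binary meets, where the filter collection is ordered by reverse inclusion with meet a ⩕ b = { u ∧ v | u ∈ a, v ∈ b } and top {⊤}. Conversely, given such a meet-preserving map γ from X to filters, the relation xRy iff y ∈ γ(x) satisfies the □-frame conditions (B1)–(B4). -/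
/-- The conditions (B1)–(B4) on the relation `R` of a `□`-frame. -/
structure IsBoxFrameRel {α : Type*} [SemilatticeInf α] [OrderTop α]
    (R : α → α → Prop) : Prop where
  b1 : (∀ x : α, R ⊤ x ↔ x = ⊤) ∧ ∀ x : α, R x ⊤
  b2 : ∀ x y z : α, R x y → y ≤ z → R x z
  b3 : ∀ x y x' y' : α, R x y → R x' y' → R (x ⊓ x') (y ⊓ y')
  b4 : ∀ x x' z : α, R (x ⊓ x') z → ∃ y y' : α, R x y ∧ R x' y' ∧ y ⊓ y' = z

/-- The meet of two filters in the semilattice `G(X)` of filters ordered by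
reverse inclusion. -/
def filterMeet {α : Type*} [SemilatticeInf α] (a b : Set α) : Set α :=
  {z : α | ∃ u ∈ a, ∃ v ∈ b, z = u ⊓ v}

/-!
Under the dictionary `γ x = {y | x R y}`, (B2) says that each `γ x` is up-closed, (B1) that
`γ ⊤ = {⊤}` and that `⊤ ∈ γ x`, and (B3), (B4) are the two inclusions of
`γ (x ⊓ x') = γ x ⩕ γ x'`. Closure of `γ x` under meets is (B3) with `x' = x`.
-/

namespace IsBoxFrameRel

variable {α : Type*} [SemilatticeInf α] [OrderTop α] {R : α → α → Prop}

theorem isSLFilter (hR : IsBoxFrameRel R) (x : α) : IsSLFilter {y | R x y} := by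
  refine ⟨⟨⊤, hR.b1.2 x⟩, fun y hy z hyz => hR.b2 x y z hy hyz, fun y hy z hz => ?_⟩
  have hxx : R (x ⊓ x) (y ⊓ z) := hR.b3 x y x z hy hz
  rwa [inf_idem] at hxx

theorem setOf_top (hR : IsBoxFrameRel R) : {y | R ⊤ y} = {⊤} :=
  Set.ext hR.b1.1

theorem setOf_inf (hR : IsBoxFrameRel R) (x x' : α) :
    {y | R (x ⊓ x') y} = filterMeet {y | R x y} {y | R x' y} := by
  ext z
  constructor
  · intro hz
    obtain ⟨y, y', hy, hy', rfl⟩ := hR.b4 x x' z hz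
    exact ⟨y, hy, y', hy', rfl⟩
  · rintro ⟨y, hy, y', hy', rfl⟩
    exact hR.b3 x y x' y' hy hy'

theorem of_setOf (hfilter : ∀ x, IsSLFilter {y | R x y}) (htop : {y | R ⊤ y} = {⊤})
    (hinf : ∀ x x', {y | R (x ⊓ x') y} = filterMeet {y | R x y} {y | R x' y}) :
    IsBoxFrameRel R where
  b1 := by
    refine ⟨fun y => Set.ext_iff.1 htop y, fun x => ?_⟩
    obtain ⟨⟨y, hy⟩, hup, -⟩ := hfilter x
    exact hup y hy ⊤ le_top
  b2 x y z hy hyz := (hfilter x).2.1 y hy z hyz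
  b3 x y x' y' hy hy' := by
    change y ⊓ y' ∈ {y | R (x ⊓ x') y}
    rw [hinf]
    exact ⟨y, hy, y', hy', rfl⟩
  b4 x x' z hz := by
    change z ∈ {y | R (x ⊓ x') y} at hz
    rw [hinf] at hz
    obtain ⟨y, hy, y', hy', rfl⟩ := hz
    exact ⟨y, y', hy, hy', rfl⟩

end IsBoxFrameRel

theorem boxFrame_dialgebra_correspondence {α : Type*} [SemilatticeInf α]
    [OrderTop α] :
    (∀ R : α → α → Prop, IsBoxFrameRel R →
      (∀ x : α, IsSLFilter {y : α | R x y}) ∧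
      {y : α | R (⊤ : α) y} = {(⊤ : α)} ∧
      ∀ x x' : α, {y : α | R (x ⊓ x') y}
        = filterMeet {y : α | R x y} {y : α | R x' y}) ∧
    (∀ γ : α → Set α, (∀ x : α, IsSLFilter (γ x)) → γ ⊤ = {(⊤ : α)} →
      (∀ x x' : α, γ (x ⊓ x') = filterMeet (γ x) (γ x')) →
      IsBoxFrameRel (fun x y => y ∈ γ x)) :=
  ⟨fun _ hR => ⟨hR.isSLFilter, hR.setOf_top, hR.setOf_inf⟩,
    fun _ hfilter htop hinf => IsBoxFrameRel.of_setOf hfilter htop hinf⟩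
end
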